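/- (Size of the conditional independence error.) Let Λ_1,…,Λ_𝒩 be disjoint disks of radius T in ℝ² with centers ω_i, satisfying min_{i≠j} dist(Λ_i,Λ_j) ≥ 10T. Let f_i be signed measures with f_i = X_i − Leb|_{Λ_i}, where X_i is a finite point measure on Λ_i with at most 10T² atoms, and set D_i := f_i(Λ_i). Then | (1/2)∑_{i≠j} ∬_{Λ_i×Λ_j} (−log|x−y|) df_i(x) df_j(y) − (1/2)∑_{i≠j} (−D_i D_j log|ω_i−ω_j|) | ≤ C·T⁵·∑_{i≠j} 1/dist(Λ_i,Λ_j), for a universal constant C. -/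

import Mathlib

/-!
Write `r = |ω_i - ω_j|`. The fluctuation measure `f_i` has total mass `D_i`, so replacing the
kernel `-log|x - y|` by `log r - log|x - y|` shifts the interaction of `f_i` and `f_j` by exactly
`-D_i D_j log r`: the error is the interaction through this new kernel. Since `|x - y|` differs from
`r` by at most `2T` on `Λ_i × Λ_j`, the new kernel is bounded there by `2T / dist(Λ_i, Λ_j)`, and
`f_i` has total variation at most `#X_i + πT² ≤ 14T²`; each pair thus contributes at most
`392 T⁵ / dist(Λ_i, Λ_j)`.
-/

open MeasureTheory Metric

section Fluctuation

variable {α : Type*} [MeasurableSpace α]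

/-- `∬ F d(X - μ|_s) d(Y - μ|_t)`, the interaction through the kernel `F` of the fluctuation
measures of the point configurations `X ⊆ s` and `Y ⊆ t`. -/
noncomputable def fluctuationPairing (μ : Measure α) (X Y : Finset α) (s t : Set α)
    (F : α → α → ℝ) : ℝ :=
  (∑ x ∈ X, ∑ y ∈ Y, F x y) - (∑ x ∈ X, ∫ y in t, F x y ∂μ)
    - (∫ x in s, (∑ y ∈ Y, F x y) ∂μ) + ∫ x in s, ∫ y in t, F x y ∂μ ∂μ

variable {μ : Measure α} {X Y : Finset α} {s t : Set α}

lemma abs_sum_le_card_mul {ι : Type*} (X : Finset ι) {f : ι → ℝ} {b : ℝ}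
    (h : ∀ x ∈ X, |f x| ≤ b) : |∑ x ∈ X, f x| ≤ X.card * b := by
  simpa using (Finset.abs_sum_le_sum_abs f X).trans (Finset.sum_le_sum h)

lemma abs_setIntegral_le (hs : μ s < ⊤) {f : α → ℝ} {b : ℝ} (h : ∀ x ∈ s, |f x| ≤ b) :
    |∫ x in s, f x ∂μ| ≤ μ.real s * b := by
  simpa [mul_comm] using norm_setIntegral_le_of_norm_le_const (f := f) hs (by simpa using h)

lemma setIntegral_sub_const {f : α → ℝ} (hf : IntegrableOn f s μ) (hs : μ s < ⊤) (c : ℝ) :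
    ∫ x in s, (f x - c) ∂μ = ∫ x in s, f x ∂μ - μ.real s * c := by
  rw [integral_sub hf (integrableOn_const hs.ne), setIntegral_const, smul_eq_mul]

theorem abs_fluctuationPairing_le (hXs : ∀ x ∈ X, x ∈ s) (hYt : ∀ y ∈ Y, y ∈ t)
    (hs : μ s < ⊤) (ht : μ t < ⊤) {F : α → α → ℝ} {b : ℝ}
    (hF : ∀ x ∈ s, ∀ y ∈ t, |F x y| ≤ b) :
    |fluctuationPairing μ X Y s t F| ≤ (X.card + μ.real s) * (Y.card + μ.real t) * b := by
  have hsum : ∀ x ∈ s, |∑ y ∈ Y, F x y| ≤ Y.card * b := fun x hx ↦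
    abs_sum_le_card_mul Y fun y hy ↦ hF x hx y (hYt y hy)
  have hint : ∀ x ∈ s, |∫ y in t, F x y ∂μ| ≤ μ.real t * b := fun x hx ↦
    abs_setIntegral_le ht (hF x hx)
  have h₁ := abs_sum_le_card_mul X fun x hx ↦ hsum x (hXs x hx)
  have h₂ := abs_sum_le_card_mul X fun x hx ↦ hint x (hXs x hx)
  have h₃ := abs_setIntegral_le hs hsum
  have h₄ := abs_setIntegral_le hs hint
  rw [abs_le] at h₁ h₂ h₃ h₄ ⊢
  unfold fluctuationPairing
  constructor <;> nlinarith

variable [TopologicalSpace α] [SecondCountableTopology α] [T2Space α] [OpensMeasurableSpace α]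
  [IsFiniteMeasureOnCompacts μ] [SFinite μ]

theorem fluctuationPairing_sub_const (hXs : ∀ x ∈ X, x ∈ s) (hYt : ∀ y ∈ Y, y ∈ t)
    (hs : IsCompact s) (ht : IsCompact t) {F : α → α → ℝ}
    (hF : ContinuousOn (Function.uncurry F) (s ×ˢ t)) (c : ℝ) :
    fluctuationPairing μ X Y s t (fun x y ↦ F x y - c)
      = fluctuationPairing μ X Y s t F - c * (X.card - μ.real s) * (Y.card - μ.real t) := by
  have hslice : ∀ x ∈ s, IntegrableOn (F x) t μ := fun x hx ↦
    (hF.comp (Continuous.prodMk_right x).continuousOn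
      fun y hy ↦ ⟨hx, hy⟩).integrableOn_compact ht
  have hslice' : ∀ y ∈ t, IntegrableOn (F · y) s μ := fun y hy ↦
    (hF.comp (Continuous.prodMk_left y).continuousOn
      fun x hx ↦ ⟨hx, hy⟩).integrableOn_compact hs
  have hsum : IntegrableOn (fun x ↦ ∑ y ∈ Y, F x y) s μ :=
    integrable_finsetSum Y fun y hy ↦ hslice' y (hYt y hy)
  have hinner : IntegrableOn (fun x ↦ ∫ y in t, F x y ∂μ) s μ := by
    have := (hF.integrableOn_compact (μ := μ.prod μ) (hs.prod ht))
    rw [IntegrableOn, ← Measure.prod_restrict] at this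
    exact this.integral_prod_left
  unfold fluctuationPairing
  rw [Finset.sum_congr rfl fun x hx ↦
      setIntegral_sub_const (hslice x (hXs x hx)) ht.measure_lt_top c,
    setIntegral_congr_fun hs.measurableSet fun x hx ↦
      setIntegral_sub_const (hslice x hx) ht.measure_lt_top c]
  simp only [Finset.sum_sub_distrib, Finset.sum_const, nsmul_eq_mul]
  rw [setIntegral_sub_const hsum hs.measure_lt_top, setIntegral_sub_const hinner hs.measure_lt_top]
  ring

end Fluctuation

lemma abs_log_sub_log_le {u v d : ℝ} (hd : 0 < d) (hu : d ≤ u) (hv : d ≤ v) :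
    |Real.log u - Real.log v| ≤ |u - v| / d := by
  have log_sub_le : ∀ u v, d ≤ u → d ≤ v → Real.log u - Real.log v ≤ |u - v| / d := by
    intro u v hu hv
    have hv0 : 0 < v := hd.trans_le hv
    calc Real.log u - Real.log v = Real.log (u / v) :=
          (Real.log_div (hd.trans_le hu).ne' hv0.ne').symm
      _ ≤ u / v - 1 := Real.log_le_sub_one_of_pos (div_pos (hd.trans_le hu) hv0)
      _ = (u - v) / v := by field_simp
      _ ≤ |u - v| / v := by gcongr; exact le_abs_self _
      _ ≤ |u - v| / d := by gcongr
  rw [abs_le]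
  exact ⟨by linarith [abs_sub_comm u v ▸ log_sub_le v u hv hu], log_sub_le u v hu hv⟩

lemma abs_dist_sub_dist_le_of_mem_closedBall {α : Type*} [PseudoMetricSpace α] {a b x y : α}
    {T : ℝ} (hx : x ∈ closedBall a T) (hy : y ∈ closedBall b T) :
    |dist x y - dist a b| ≤ 2 * T := by
  rw [← Real.dist_eq, two_mul]
  exact (dist_dist_dist_le x y a b).trans (add_le_add hx hy)

lemma measureReal_closedBall_fin_two (x : EuclideanSpace ℝ (Fin 2)) {T : ℝ} (hT : 0 ≤ T) :
    volume.real (closedBall x T) = Real.pi * T ^ 2 := by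
  simp [measureReal_def, ENNReal.toReal_ofReal hT, Real.pi_nonneg, mul_comm]

theorem abs_fluctuationPairing_neg_log_dist_add_le {T : ℝ} (hT : 0 ≤ T)
    {a b : EuclideanSpace ℝ (Fin 2)} {X Y : Finset (EuclideanSpace ℝ (Fin 2))}
    (hab : 2 * T < dist a b) (hX : ∀ p ∈ X, dist p a ≤ T) (hY : ∀ p ∈ Y, dist p b ≤ T)
    (hXcard : (X.card : ℝ) ≤ 10 * T ^ 2) (hYcard : (Y.card : ℝ) ≤ 10 * T ^ 2) :
    |fluctuationPairing volume X Y (closedBall a T) (closedBall b T)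
        (fun x y ↦ -Real.log (dist x y))
      + ((X.card : ℝ) - Real.pi * T ^ 2) * ((Y.card : ℝ) - Real.pi * T ^ 2)
        * Real.log (dist a b)|
      ≤ 392 * T ^ 5 / (dist a b - 2 * T) := by
  set d := dist a b - 2 * T
  have hd : 0 < d := by linarith
  have hnear : ∀ x ∈ closedBall a T, ∀ y ∈ closedBall b T, |dist x y - dist a b| ≤ 2 * T :=
    fun x hx y hy ↦ abs_dist_sub_dist_le_of_mem_closedBall hx hy
  have hfar : ∀ x ∈ closedBall a T, ∀ y ∈ closedBall b T, d ≤ dist x y := fun x hx y hy ↦ by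
    linarith [(abs_le.mp (hnear x hx y hy)).1]
  have hcont : ContinuousOn (Function.uncurry fun x y ↦ -Real.log (dist x y))
      (closedBall a T ×ˢ closedBall b T) :=
    (continuous_dist.continuousOn.log fun p hp ↦ (hd.trans_le (hfar _ hp.1 _ hp.2)).ne').neg
  have hkernel : ∀ x ∈ closedBall a T, ∀ y ∈ closedBall b T,
      |-Real.log (dist x y) - -Real.log (dist a b)| ≤ 2 * T / d := fun x hx y hy ↦ by
    rw [neg_sub_neg]
    calc |Real.log (dist a b) - Real.log (dist x y)| ≤ |dist a b - dist x y| / d :=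
          abs_log_sub_log_le hd (by linarith) (hfar x hx y hy)
      _ ≤ 2 * T / d := by rw [abs_sub_comm]; gcongr; exact hnear x hx y hy
  have hX' : ∀ x ∈ X, x ∈ closedBall a T := hX
  have hY' : ∀ y ∈ Y, y ∈ closedBall b T := hY
  have hbound := abs_fluctuationPairing_le (μ := volume) hX' hY' measure_closedBall_lt_top
    measure_closedBall_lt_top hkernel
  rw [fluctuationPairing_sub_const (μ := volume) hX' hY' (isCompact_closedBall a T)
    (isCompact_closedBall b T) hcont, measureReal_closedBall_fin_two a hT,
    measureReal_closedBall_fin_two b hT] at hbound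
  have hA : Real.pi * T ^ 2 ≤ 4 * T ^ 2 := by gcongr; exact Real.pi_le_four
  calc _ = _ := by ring_nf
    _ ≤ _ := hbound
    _ ≤ 14 * T ^ 2 * (14 * T ^ 2) * (2 * T / d) := by gcongr <;> linarith
    _ = 392 * T ^ 5 / d := by ring

/-- size of the conditional independence error: for disjoint
well-separated disks `Λ_i = D(ω_i, T)` carrying at most `10T²` points each,
the true pairwise logarithmic interaction of the fluctuation measures
`f_i = X_i - Leb|_{Λ_i}` differs from the approximation
`-D_i D_j log|ω_i - ω_j|` by at most `C T⁵ ∑_{i≠j} 1/dist(Λ_i,Λ_j)`. -/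
theorem stmt9 :
    ∃ C : ℝ, 0 < C ∧
    ∀ (T : ℝ), 0 < T →
    ∀ (𝒩 : ℕ) (ω : Fin 𝒩 → EuclideanSpace ℝ (Fin 2))
      (X : Fin 𝒩 → Finset (EuclideanSpace ℝ (Fin 2)))
      (D : Fin 𝒩 → ℝ) (I : Fin 𝒩 → Fin 𝒩 → ℝ),
      (∀ i j : Fin 𝒩, i ≠ j → 10 * T ≤ dist (ω i) (ω j) - 2 * T) →
      (∀ i, ∀ p ∈ X i, dist p (ω i) ≤ T) →
      (∀ i, ((X i).card : ℝ) ≤ 10 * T ^ 2) →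
      (∀ i, D i = ((X i).card : ℝ) - Real.pi * T ^ 2) →
      (∀ i j, I i j =
        (∑ x ∈ X i, ∑ y ∈ X j, -Real.log (dist x y))
        - (∑ x ∈ X i, ∫ y in closedBall (ω j) T, -Real.log (dist x y))
        - (∫ x in closedBall (ω i) T, ∑ y ∈ X j, -Real.log (dist x y))
        + (∫ x in closedBall (ω i) T,
            ∫ y in closedBall (ω j) T, -Real.log (dist x y))) →
      |(1/2) * (∑ i : Fin 𝒩, ∑ j ∈ Finset.univ.erase i, I i j)
        - (1/2) * (∑ i : Fin 𝒩, ∑ j ∈ Finset.univ.erase i,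
            -(D i * D j * Real.log (dist (ω i) (ω j))))|
      ≤ C * T ^ 5 * (∑ i : Fin 𝒩, ∑ j ∈ Finset.univ.erase i,
            1 / (dist (ω i) (ω j) - 2 * T)) := by
  refine ⟨196, by norm_num, fun T hT 𝒩 ω X D I hsep hX hcard hD hI ↦ ?_⟩
  have hpair : ∀ i, ∀ j ∈ Finset.univ.erase i,
      dist (I i j) (-(D i * D j * Real.log (dist (ω i) (ω j))))
        ≤ 392 * T ^ 5 * (1 / (dist (ω i) (ω j) - 2 * T)) := fun i j hj ↦ by
    have hij : i ≠ j := (Finset.mem_erase.mp hj).1.symm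
    rw [Real.dist_eq, sub_neg_eq_add, hI, hD, hD, mul_one_div]
    exact abs_fluctuationPairing_neg_log_dist_add_le hT.le (by linarith [hsep i j hij])
      (hX i) (hX j) (hcard i) (hcard j)
  calc _ = 1 / 2 * dist (∑ i, ∑ j ∈ Finset.univ.erase i, I i j)
        (∑ i, ∑ j ∈ Finset.univ.erase i, -(D i * D j * Real.log (dist (ω i) (ω j)))) := by
        rw [← mul_sub, abs_mul, Real.dist_eq, abs_of_pos one_half_pos]
    _ ≤ 1 / 2 * ∑ i, ∑ j ∈ Finset.univ.erase i,
          392 * T ^ 5 * (1 / (dist (ω i) (ω j) - 2 * T)) := by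
        gcongr
        exact dist_sum_sum_le_of_le _ fun i _ ↦ dist_sum_sum_le_of_le _ (hpair i)
    _ = _ := by simp only [← Finset.mul_sum]; ring
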